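/- Let d ∈ {2,3} and k ≥ 2. For every vector field f with components in 𝒫^{k-2}(ℝ^d) there exist a vector field u with components in 𝒫^k(ℝ^d) satisfying div u = 0 and a scalar p ∈ 𝒫^{k-1}(ℝ^d) such that −Δu + ∇p = f; that is, {−Δu + ∇p : u ∈ [𝒫^k(ℝ^d)]^d with div u = 0, p ∈ 𝒫^{k-1}(ℝ^d)} = [𝒫^{k-2}(ℝ^d)]^d. -/

import Mathlib

/-!
Write `Δ = ∂ᵢ² + Δ'` with `Δ'` the Laplacian in the remaining variables, and let `A` be the
formal antiderivative in `xᵢ`, which commutes with `Δ'`. Since `Δ'` is nilpotent on polynomials,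
`u = ∑ₙ (-1)ⁿ A²ⁿ⁺² Δ'ⁿ f` is a finite sum, and it solves `Δu = f`; as `A²Δ'` does not raise the
degree, `deg u ≤ deg f + 2`. For the Stokes system choose `w` with `Δw = -f` componentwise and
`φ` with `Δφ = div w`: then `u = w - ∇φ` is divergence free, and `p = -div w` gives
`-Δu + ∇p = f + ∇(Δφ - div w) = f`.
-/

open MvPolynomial

/-- The formal Laplacian `Δp = ∑ⱼ ∂ⱼ∂ⱼp` of a polynomial in `d` variables. -/
noncomputable def lap {d : ℕ} (p : MvPolynomial (Fin d) ℝ) : MvPolynomial (Fin d) ℝ :=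
  ∑ j, pderiv j (pderiv j p)

/-- The formal divergence `div v = ∑ᵢ ∂ᵢvᵢ` of a polynomial vector field. -/
noncomputable def pdiv {d : ℕ} (v : Fin d → MvPolynomial (Fin d) ℝ) : MvPolynomial (Fin d) ℝ :=
  ∑ i, pderiv i (v i)

namespace Module.End

variable {R M : Type*} [Ring R] [AddCommGroup M] [Module R M]

theorem exists_mem_add_apply_eq_of_pow_apply_eq_zero {D L A : Module.End R M}
    (hDA : D * A = 1) (hLA : Commute L A) {P Q : Submodule R M}
    (hAP : ∀ f ∈ P, A f ∈ Q) (hALP : ∀ f ∈ P, A (L f) ∈ P) (N : ℕ) {f : M} (hf : f ∈ P)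
    (hN : (L ^ N) f = 0) : ∃ u ∈ Q, (D + L) u = f := by
  induction N generalizing f with
  | zero => exact ⟨0, Q.zero_mem, by simpa using hN.symm⟩
  | succ N ih =>
    have hN' : (L ^ N) (A (L f)) = 0 := by
      rw [← mul_apply, (hLA.pow_left N).eq, mul_apply, ← mul_apply _ L, ← pow_succ, hN,
        map_zero]
    obtain ⟨v, hvQ, hv⟩ := ih (hALP f hf) hN'
    refine ⟨A f - v, Q.sub_mem (hAP f hf) hvQ, ?_⟩
    rw [map_sub, hv, LinearMap.add_apply, ← mul_apply D, hDA, one_apply, ← mul_apply L, hLA.eq,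
      mul_apply, add_sub_cancel_right]

end Module.End

namespace MvPolynomial

section Derivatives

variable {R σ : Type*}

theorem pderiv_pderiv_comm [CommRing R] (i j : σ) (p : MvPolynomial σ R) :
    pderiv i (pderiv j p) = pderiv j (pderiv i p) := by
  have h : ⁅pderiv i, pderiv j⁆ = (0 : Derivation R (MvPolynomial σ R) (MvPolynomial σ R)) :=
    derivation_ext fun l => by
      classical
      rw [Derivation.commutator_apply]
      simp [pderiv_X, Pi.single_apply, apply_ite]
  rw [← sub_eq_zero, ← Derivation.commutator_apply, h, Derivation.zero_apply]

theorem totalDegree_pderiv_le [CommSemiring R] (i : σ) (p : MvPolynomial σ R) :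
    (pderiv i p).totalDegree ≤ p.totalDegree - 1 := by
  refine Finset.sup_le fun m hm => ?_
  rw [mem_support_iff, coeff_pderiv] at hm
  have := le_totalDegree (mem_support_iff.mpr (left_ne_zero_of_mul hm))
  rw [Finsupp.sum_add_index' (fun _ => rfl) (fun _ _ _ => rfl), Finsupp.sum_single_index rfl]
    at this
  omega

end Derivatives

section Antiderivative

variable {K σ : Type*} [Field K]

noncomputable def antideriv (i : σ) : Module.End K (MvPolynomial σ K) :=
  (basisMonomials σ K).constr K fun m => monomial (m + Finsupp.single i 1) (m i + 1 : K)⁻¹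

theorem antideriv_monomial (i : σ) (m : σ →₀ ℕ) (c : K) :
    antideriv i (monomial m c) = monomial (m + Finsupp.single i 1) ((m i + 1 : K)⁻¹ * c) := by
  have h : monomial m c = c • basisMonomials σ K m := by simp [smul_monomial]
  rw [h, antideriv, map_smul, Module.Basis.constr_basis, smul_monomial, smul_eq_mul, mul_comm]

theorem pderiv_mul_antideriv [CharZero K] (i : σ) :
    (pderiv i).toLinearMap * antideriv i = (1 : Module.End K (MvPolynomial σ K)) :=
  (basisMonomials σ K).ext fun m => by simp [antideriv_monomial, Nat.cast_add_one_ne_zero]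

theorem commute_pderiv_antideriv {i j : σ} (h : j ≠ i) :
    Commute (pderiv j).toLinearMap (antideriv i : Module.End K (MvPolynomial σ K)) :=
  (basisMonomials σ K).ext fun m => by
    have hshift : m + Finsupp.single i 1 - Finsupp.single j 1
        = m - Finsupp.single j 1 + Finsupp.single i 1 := by
      classical
      ext l
      simp only [Finsupp.tsub_apply, Finsupp.add_apply, Finsupp.single_apply]
      grind
    simp [antideriv_monomial, h, h.symm, hshift]

theorem totalDegree_antideriv_le (i : σ) (p : MvPolynomial σ K) :
    (antideriv i p).totalDegree ≤ p.totalDegree + 1 := by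
  conv_lhs => rw [← p.support_sum_monomial_coeff, map_sum]
  refine totalDegree_finsetSum_le fun m hm => ?_
  rw [antideriv_monomial]
  refine (totalDegree_monomial_le _ _).trans ?_
  rw [Finsupp.sum_add_index' (fun _ => rfl) (fun _ _ _ => rfl), Finsupp.sum_single_index rfl]
  exact Nat.add_le_add_right (le_totalDegree hm) 1

end Antiderivative

section Laplacian

variable {R σ : Type*} [CommRing R]

noncomputable def partialLaplacian (s : Finset σ) : Module.End R (MvPolynomial σ R) :=
  ∑ j ∈ s, (pderiv j).toLinearMap ^ 2

theorem partialLaplacian_apply (s : Finset σ) (p : MvPolynomial σ R) :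
    partialLaplacian s p = ∑ j ∈ s, pderiv j (pderiv j p) := by
  simp [partialLaplacian, LinearMap.sum_apply, sq]

theorem partialLaplacian_eq_add_erase [DecidableEq σ] {s : Finset σ} {i : σ} (hi : i ∈ s) :
    (partialLaplacian s : Module.End R (MvPolynomial σ R))
      = (pderiv i).toLinearMap ^ 2 + partialLaplacian (s.erase i) :=
  (Finset.add_sum_erase s _ hi).symm

theorem pderiv_partialLaplacian (i : σ) (s : Finset σ) (p : MvPolynomial σ R) :
    pderiv i (partialLaplacian s p) = partialLaplacian s (pderiv i p) := by
  simp only [partialLaplacian_apply, map_sum, pderiv_pderiv_comm i]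

theorem totalDegree_partialLaplacian_le (s : Finset σ) (p : MvPolynomial σ R) :
    (partialLaplacian s p).totalDegree ≤ p.totalDegree - 2 := by
  rw [partialLaplacian_apply]
  refine totalDegree_finsetSum_le fun j _ => ?_
  have := totalDegree_pderiv_le j (pderiv j p)
  have := totalDegree_pderiv_le j p
  omega

theorem partialLaplacian_apply_eq_zero_of_totalDegree_le_one (s : Finset σ)
    {p : MvPolynomial σ R} (hp : p.totalDegree ≤ 1) : partialLaplacian s p = 0 := by
  rw [partialLaplacian_apply]
  refine Finset.sum_eq_zero fun j _ => ?_
  rw [totalDegree_eq_zero_iff_eq_C.mp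
    (Nat.le_zero.mp ((totalDegree_pderiv_le j p).trans (by omega))), pderiv_C]

theorem partialLaplacian_pow_apply_eq_zero (s : Finset σ) (n : ℕ) {p : MvPolynomial σ R}
    (hp : p.totalDegree ≤ n) : (partialLaplacian s ^ (n + 1)) p = 0 := by
  induction n generalizing p with
  | zero => exact partialLaplacian_apply_eq_zero_of_totalDegree_le_one s (by omega)
  | succ n ih =>
    rw [pow_succ, Module.End.mul_apply]
    exact ih ((totalDegree_partialLaplacian_le s p).trans (by omega))

variable {K : Type*} [Field K]

theorem commute_partialLaplacian_antideriv {s : Finset σ} {i : σ} (hi : i ∉ s) :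
    Commute (partialLaplacian s) (antideriv i : Module.End K (MvPolynomial σ K)) :=
  Commute.sum_left _ _ _ fun _ hj =>
    (commute_pderiv_antideriv (ne_of_mem_of_not_mem hj hi)).pow_left 2

theorem exists_partialLaplacian_apply_eq [CharZero K] [DecidableEq σ] {s : Finset σ}
    (hs : s.Nonempty) {n : ℕ} {f : MvPolynomial σ K} (hf : f.totalDegree ≤ n) :
    ∃ u : MvPolynomial σ K, u.totalDegree ≤ n + 2 ∧ partialLaplacian s u = f := by
  obtain ⟨i, hi⟩ := hs
  have hA (p : MvPolynomial σ K) : ((antideriv i ^ 2) p).totalDegree ≤ p.totalDegree + 2 := by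
    have := totalDegree_antideriv_le i p
    have := totalDegree_antideriv_le i (antideriv i p)
    rw [sq, Module.End.mul_apply]
    omega
  have hAL (p : MvPolynomial σ K) :
      ((antideriv i ^ 2) (partialLaplacian (s.erase i) p)).totalDegree ≤ p.totalDegree := by
    by_cases hp : p.totalDegree ≤ 1
    · simp [partialLaplacian_apply_eq_zero_of_totalDegree_le_one _ hp]
    · have := totalDegree_partialLaplacian_le (s.erase i) p
      have := hA (partialLaplacian (s.erase i) p)
      omega
  obtain ⟨u, hu, hLu⟩ := Module.End.exists_mem_add_apply_eq_of_pow_apply_eq_zero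
    (pow_mul_pow_eq_one 2 (pderiv_mul_antideriv i))
    ((commute_partialLaplacian_antideriv (s.notMem_erase i)).pow_right 2)
    (P := restrictTotalDegree σ K n) (Q := restrictTotalDegree σ K (n + 2))
    (by simpa only [mem_restrictTotalDegree] using fun p hp => (hA p).trans (by omega))
    (by simpa only [mem_restrictTotalDegree] using fun p hp => (hAL p).trans hp)
    (n + 1) ((mem_restrictTotalDegree σ _ _).mpr hf) (partialLaplacian_pow_apply_eq_zero _ n hf)
  exact ⟨u, (mem_restrictTotalDegree σ _ _).mp hu, by rw [partialLaplacian_eq_add_erase hi, hLu]⟩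

end Laplacian

end MvPolynomial

section LaplacianDivergence

variable {d : ℕ}

theorem lap_eq_partialLaplacian (p : MvPolynomial (Fin d) ℝ) :
    lap p = partialLaplacian Finset.univ p :=
  (partialLaplacian_apply _ p).symm

theorem lap_sub (p q : MvPolynomial (Fin d) ℝ) : lap (p - q) = lap p - lap q := by
  simp only [lap_eq_partialLaplacian, map_sub]

theorem pderiv_lap (i : Fin d) (p : MvPolynomial (Fin d) ℝ) :
    pderiv i (lap p) = lap (pderiv i p) := by
  simp only [lap_eq_partialLaplacian, pderiv_partialLaplacian]

theorem totalDegree_lap_le (p : MvPolynomial (Fin d) ℝ) :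
    (lap p).totalDegree ≤ p.totalDegree - 2 := by
  simpa only [lap_eq_partialLaplacian] using totalDegree_partialLaplacian_le _ p

theorem exists_lap_eq (hd : 0 < d) {n : ℕ} {f : MvPolynomial (Fin d) ℝ}
    (hf : f.totalDegree ≤ n) : ∃ u, u.totalDegree ≤ n + 2 ∧ lap u = f := by
  simpa only [lap_eq_partialLaplacian] using
    exists_partialLaplacian_apply_eq (Finset.univ_nonempty_iff.mpr ⟨⟨0, hd⟩⟩) hf

theorem totalDegree_pdiv_le {v : Fin d → MvPolynomial (Fin d) ℝ} {n : ℕ}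
    (hv : ∀ i, (v i).totalDegree ≤ n) : (pdiv v).totalDegree ≤ n - 1 :=
  totalDegree_finsetSum_le fun i _ =>
    (totalDegree_pderiv_le i (v i)).trans (Nat.sub_le_sub_right (hv i) 1)

theorem pdiv_sub_grad (v : Fin d → MvPolynomial (Fin d) ℝ) (φ : MvPolynomial (Fin d) ℝ) :
    pdiv (fun i => v i - pderiv i φ) = pdiv v - lap φ := by
  simp only [pdiv, lap, map_sub, Finset.sum_sub_distrib]

end LaplacianDivergence

/-- For `d ∈ {2, 3}` and `k ≥ 2`:
`{−Δu + ∇p : u ∈ [𝒫ᵏ(ℝᵈ)]ᵈ, div u = 0, p ∈ 𝒫^{k-1}(ℝᵈ)} = [𝒫^{k-2}(ℝᵈ)]ᵈ`. -/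
theorem stokes_momentum_range_eq (d k : ℕ) (hd : d = 2 ∨ d = 3) (hk : 2 ≤ k) :
    {f : Fin d → MvPolynomial (Fin d) ℝ |
        ∃ (u : Fin d → MvPolynomial (Fin d) ℝ) (p : MvPolynomial (Fin d) ℝ),
          (∀ i, (u i).totalDegree ≤ k) ∧ pdiv u = 0 ∧ p.totalDegree ≤ k - 1 ∧
          f = fun i => -lap (u i) + pderiv i p} =
      {f : Fin d → MvPolynomial (Fin d) ℝ | ∀ i, (f i).totalDegree ≤ k - 2} := by
  ext f
  refine ⟨?_, fun hf => ?_⟩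
  · rintro ⟨u, p, hu, -, hp, rfl⟩ i
    refine (totalDegree_add _ _).trans (max_le ?_ ?_)
    · rw [totalDegree_neg]
      exact (totalDegree_lap_le _).trans (Nat.sub_le_sub_right (hu i) 2)
    · exact (totalDegree_pderiv_le i p).trans (by omega)
  have hd0 : 0 < d := by omega
  choose w hw_deg hw using fun i =>
    exists_lap_eq hd0 ((totalDegree_neg (f i)).trans_le (hf i))
  replace hw_deg (i : Fin d) : (w i).totalDegree ≤ k := (hw_deg i).trans (by omega)
  obtain ⟨φ, hφ_deg, hφ⟩ := exists_lap_eq hd0 (totalDegree_pdiv_le hw_deg)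
  refine ⟨fun i => w i - pderiv i φ, -pdiv w, fun i => ?_, ?_, ?_, ?_⟩
  · exact (totalDegree_sub _ _).trans
      (max_le (hw_deg i) ((totalDegree_pderiv_le i φ).trans (by omega)))
  · rw [pdiv_sub_grad, hφ, sub_self]
  · rw [totalDegree_neg]
    exact totalDegree_pdiv_le hw_deg
  · funext i
    rw [lap_sub, hw, ← pderiv_lap, hφ, map_neg]
    ring
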